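/- Let S = S₀ ⊔ S_A be a finite set partitioned into two disjoint subsets with |S₀| = m, and let N : S × S → R be a symmetric function (values in a commutative ring) with N(a,b) = 0 whenever both a,b ∈ S₀. Fix an enumeration S₀ = {c₁,…,c_m} and an integer 0 < p ≤ m. Then the hafnian factorizes: Σ_{M ∈ M(S)} Π_{{a,b}∈M} N(a,b) = Σ_{(P₁,P₂)} [Σ_{M₁∈M(P₁∪{c₁,…,c_p})} Π_{{a,b}∈M₁} N(a,b)] · [Σ_{M₂∈M(P₂∪{c_{p+1},…,c_m})} Π_{{a,b}∈M₂} N(a,b)], where the outer sum ranges over ordered partitions of S_A into a subset P₁ with p elements and its complement P₂, and M(T) denotes the set of perfect matchings of T. -/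
import Mathlib


open scoped Classical

/-- `M` is a perfect matching of the finite set `s`: a collection of non-diagonal
unordered pairs, all contained in `s`, such that every element of `s` lies in
exactly one pair. -/
def IsPM {α : Type*} (s : Finset α) (M : Finset (Sym2 α)) : Prop :=
  (∀ z ∈ M, ¬ z.IsDiag) ∧ (∀ z ∈ M, ∀ a, a ∈ z → a ∈ s) ∧
    (∀ a ∈ s, ∃! z, z ∈ M ∧ a ∈ z)

noncomputable def pmPartner {α : Type*} (M : Finset (Sym2 α)) (a : α) : α :=
  if h : ∃ z ∈ M, a ∈ z then Sym2.Mem.other h.choose_spec.2 else a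

section
variable {α : Type*} {s : Finset α} {M : Finset (Sym2 α)} {a : α}

theorem pmPartner_pair_mem (hM : IsPM s M) (ha : a ∈ s) :
    s(a, pmPartner M a) ∈ M := by
  obtain ⟨z, ⟨hz, haz⟩, -⟩ := hM.2.2 a ha
  have h : ∃ z ∈ M, a ∈ z := ⟨z, hz, haz⟩
  rw [pmPartner, dif_pos h]
  rw [Sym2.other_spec]
  exact h.choose_spec.1

theorem pair_eq (hM : IsPM s M) (ha : a ∈ s) {z : Sym2 α} (hz : z ∈ M) (haz : a ∈ z) :
    z = s(a, pmPartner M a) := by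
  obtain ⟨w, hw, huniq⟩ := hM.2.2 a ha
  rw [huniq z ⟨hz, haz⟩, huniq _ ⟨pmPartner_pair_mem hM ha, by simp⟩]

theorem pmPartner_mem (hM : IsPM s M) (ha : a ∈ s) : pmPartner M a ∈ s :=
  hM.2.1 _ (pmPartner_pair_mem hM ha) _ (by simp)

theorem pmPartner_ne (hM : IsPM s M) (ha : a ∈ s) : pmPartner M a ≠ a := by
  intro h
  have := hM.1 _ (pmPartner_pair_mem hM ha)
  rw [Sym2.mk_isDiag_iff] at this
  exact this h.symm

theorem pmPartner_invol (hM : IsPM s M) (ha : a ∈ s) :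
    pmPartner M (pmPartner M a) = a := by
  have hb : pmPartner M a ∈ s := pmPartner_mem hM ha
  have h1 : s(a, pmPartner M a) ∈ M := pmPartner_pair_mem hM ha
  have h2 := pair_eq hM hb h1 (by simp)
  rw [Sym2.eq_iff] at h2
  rcases h2 with ⟨h, h'⟩ | ⟨h, h'⟩
  · exact absurd h.symm (pmPartner_ne hM ha)
  · exact h.symm
end

section
variable {α : Type*} [DecidableEq α] {s : Finset α} {M : Finset (Sym2 α)} {a : α}

theorem pmPartner_injOn (hM : IsPM s M) : Set.InjOn (pmPartner M) ↑s := by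
  intro x hx y hy h
  rw [← pmPartner_invol hM hx, h, pmPartner_invol hM hy]

theorem pm_meets {u v : Finset α} (hd : Disjoint u v) (hcard : u.card = v.card)
    (hM : IsPM (u ∪ v) M) (hQ : ∀ z ∈ M, ∃ a ∈ z, a ∈ u) :
    ∀ z ∈ M, ∃ a ∈ z, a ∈ v := by
  have himg : v.image (pmPartner M) = u := by
    apply Finset.eq_of_subset_of_card_le
    · intro y hy
      obtain ⟨x, hx, rfl⟩ := Finset.mem_image.mp hy
      have hxg : x ∈ u ∪ v := Finset.mem_union_right _ hx
      obtain ⟨a, haz, hau⟩ := hQ _ (pmPartner_pair_mem hM hxg)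
      rcases Sym2.mem_iff.mp haz with rfl | rfl
      · exact absurd hx (Finset.disjoint_left.mp hd hau)
      · exact hau
    · rw [Finset.card_image_of_injOn ((pmPartner_injOn hM).mono (by
        intro x hx; exact Finset.mem_union_right _ hx)), hcard]
  intro z hz
  obtain ⟨a, haz, hau⟩ := hQ z hz
  rw [← himg] at hau
  obtain ⟨x, hx, rfl⟩ := Finset.mem_image.mp hau
  have hxg : x ∈ u ∪ v := Finset.mem_union_right _ hx
  have hag : pmPartner M x ∈ u ∪ v := pmPartner_mem hM hxg
  have := pair_eq hM hag hz haz
  rw [pmPartner_invol hM hxg] at this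
  refine ⟨x, ?_, hx⟩
  rw [this]; simp
end

section Main
variable {α : Type*} [DecidableEq α] {S₀ SA C₁ C₂ : Finset α} {M : Finset (Sym2 α)}

/-- The SA-elements matched into C₁. -/
noncomputable def part1 (C₁ SA : Finset α) (M : Finset (Sym2 α)) : Finset α :=
  SA.filter (fun x => ∃ z ∈ M, x ∈ z ∧ ∃ a ∈ z, a ∈ C₁)

noncomputable def match1 (C₁ : Finset α) (M : Finset (Sym2 α)) : Finset (Sym2 α) :=
  M.filter (fun z => ∃ a ∈ z, a ∈ C₁)

noncomputable def match2 (C₁ : Finset α) (M : Finset (Sym2 α)) : Finset (Sym2 α) :=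
  M.filter (fun z => ¬ ∃ a ∈ z, a ∈ C₁)

theorem part1_subset : part1 C₁ SA M ⊆ SA := fun x hx => (Finset.mem_filter.mp hx).1

theorem match1_subset : match1 C₁ M ⊆ M := fun z hz => (Finset.mem_filter.mp hz).1

theorem match2_subset : match2 C₁ M ⊆ M := fun z hz => (Finset.mem_filter.mp hz).1

theorem match_union_eq : match1 C₁ M ∪ match2 C₁ M = M := by
  ext z
  simp only [match1, match2, Finset.mem_union, Finset.mem_filter]
  constructor
  · rintro (h | h)
    exacts [h.1, h.1]
  · intro hz
    by_cases h : ∃ a ∈ z, a ∈ C₁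
    · exact Or.inl ⟨hz, h⟩
    · exact Or.inr ⟨hz, h⟩

theorem match_disjoint : Disjoint (match1 C₁ M) (match2 C₁ M) := by
  rw [Finset.disjoint_left]
  intro z hz1 hz2
  exact (Finset.mem_filter.mp hz2).2 (Finset.mem_filter.mp hz1).2

variable (hdisj : Disjoint S₀ SA) (hC₁ : C₁ ⊆ S₀)
  (hM : IsPM (S₀ ∪ SA) M) (hQ : ∀ z ∈ M, ¬ ∀ a ∈ z, a ∈ S₀)

include hdisj hC₁ hM hQ

theorem partner_mem_part1 : ∀ x ∈ C₁, pmPartner M x ∈ part1 C₁ SA M := by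
  intro x hx
  have hxg : x ∈ S₀ ∪ SA := Finset.mem_union_left _ (hC₁ hx)
  have hz : s(x, pmPartner M x) ∈ M := pmPartner_pair_mem hM hxg
  have hpSA : pmPartner M x ∈ SA := by
    have hpg : pmPartner M x ∈ S₀ ∪ SA := pmPartner_mem hM hxg
    rcases Finset.mem_union.mp hpg with h | h
    · exact absurd (fun a ha => by
        rcases Sym2.mem_iff.mp ha with rfl | rfl
        · exact hC₁ hx
        · exact h) (hQ _ hz)
    · exact h
  exact Finset.mem_filter.mpr ⟨hpSA, s(x, pmPartner M x), hz, by simp, x, by simp, hx⟩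

theorem part1_eq : part1 C₁ SA M = C₁.image (pmPartner M) := by
  apply Finset.Subset.antisymm
  · intro x hx
    obtain ⟨hxSA, z, hz, hxz, a, haz, haC₁⟩ := Finset.mem_filter.mp hx
    have hxg : x ∈ S₀ ∪ SA := Finset.mem_union_right _ hxSA
    have hzeq := pair_eq hM hxg hz hxz
    have hax : a ≠ x := fun h =>
      Finset.disjoint_left.mp hdisj (hC₁ haC₁) (h ▸ hxSA)
    have hpa : pmPartner M x = a := by
      rw [hzeq] at haz
      rcases Sym2.mem_iff.mp haz with h | h
      · exact absurd h hax
      · exact h.symm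
    refine Finset.mem_image.mpr ⟨a, haC₁, ?_⟩
    rw [← hpa, pmPartner_invol hM hxg]
  · intro y hy
    obtain ⟨x, hx, rfl⟩ := Finset.mem_image.mp hy
    exact partner_mem_part1 hdisj hC₁ hM hQ x hx

theorem part1_card : (part1 C₁ SA M).card = C₁.card := by
  rw [part1_eq hdisj hC₁ hM hQ]
  exact Finset.card_image_of_injOn ((pmPartner_injOn hM).mono
    (fun x hx => Finset.mem_union_left _ (hC₁ hx)))

theorem isPM_match1 : IsPM (part1 C₁ SA M ∪ C₁) (match1 C₁ M) := by
  refine ⟨fun z hz => hM.1 z (Finset.filter_subset _ _ hz), ?_, ?_⟩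
  · intro z hz b hbz
    obtain ⟨hzM, a, haz, haC₁⟩ := Finset.mem_filter.mp hz
    have hag : a ∈ S₀ ∪ SA := Finset.mem_union_left _ (hC₁ haC₁)
    have hzeq := pair_eq hM hag hzM haz
    rw [hzeq] at hbz
    rcases Sym2.mem_iff.mp hbz with rfl | rfl
    · exact Finset.mem_union_right _ haC₁
    · exact Finset.mem_union_left _ (partner_mem_part1 hdisj hC₁ hM hQ a haC₁)
  · intro x hx
    have hxg : x ∈ S₀ ∪ SA := by
      rcases Finset.mem_union.mp hx with h | h
      · exact Finset.mem_union_right _ (Finset.mem_filter.mp h).1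
      · exact Finset.mem_union_left _ (hC₁ h)
    obtain ⟨z, ⟨hzM, hxz⟩, huniq⟩ := hM.2.2 x hxg
    have hz1 : z ∈ match1 C₁ M := by
      refine Finset.mem_filter.mpr ⟨hzM, ?_⟩
      rcases Finset.mem_union.mp hx with h | h
      · obtain ⟨-, z', hz', hxz', a, haz', haC₁⟩ := Finset.mem_filter.mp h
        have : z' = z := huniq z' ⟨hz', hxz'⟩
        exact ⟨a, this ▸ haz', haC₁⟩
      · exact ⟨x, hxz, h⟩
    exact ⟨z, ⟨hz1, hxz⟩, fun z' hz' => huniq z' ⟨Finset.filter_subset _ _ hz'.1, hz'.2⟩⟩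


theorem isPM_match2 (hC₂ : C₂ ⊆ S₀) (hcc : C₁ ∪ C₂ = S₀) (hccd : Disjoint C₁ C₂) :
    IsPM ((SA \ part1 C₁ SA M) ∪ C₂) (match2 C₁ M) := by
  refine ⟨fun z hz => hM.1 z (Finset.filter_subset _ _ hz), ?_, ?_⟩
  · intro z hz b hbz
    obtain ⟨hzM, hno⟩ := Finset.mem_filter.mp hz
    have hbg : b ∈ S₀ ∪ SA := hM.2.1 z hzM b hbz
    by_cases hb : b ∈ S₀
    · have : b ∈ C₁ ∪ C₂ := hcc ▸ hb
      rcases Finset.mem_union.mp this with h | h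
      · exact absurd ⟨b, hbz, h⟩ hno
      · exact Finset.mem_union_right _ h
    · have hbSA : b ∈ SA := (Finset.mem_union.mp hbg).resolve_left hb
      refine Finset.mem_union_left _ (Finset.mem_sdiff.mpr ⟨hbSA, fun hbP => ?_⟩)
      obtain ⟨-, z', hz', hbz', a, haz', haC₁⟩ := Finset.mem_filter.mp hbP
      obtain ⟨w, -, huniq⟩ := hM.2.2 b hbg
      rw [huniq z ⟨hzM, hbz⟩, ← huniq z' ⟨hz', hbz'⟩] at hno
      exact hno ⟨a, haz', haC₁⟩
  · intro x hx
    have hxg : x ∈ S₀ ∪ SA := by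
      rcases Finset.mem_union.mp hx with h | h
      · exact Finset.mem_union_right _ (Finset.mem_sdiff.mp h).1
      · exact Finset.mem_union_left _ (hC₂ h)
    obtain ⟨z, ⟨hzM, hxz⟩, huniq⟩ := hM.2.2 x hxg
    have hz2 : z ∈ match2 C₁ M := by
      refine Finset.mem_filter.mpr ⟨hzM, ?_⟩
      rintro ⟨a, haz, haC₁⟩
      have hzeq := pair_eq hM hxg hzM hxz
      have hxnC₁ : x ∉ C₁ := by
        rcases Finset.mem_union.mp hx with hh | hh
        · exact fun hxc =>
            Finset.disjoint_left.mp hdisj (hC₁ hxc) (Finset.mem_sdiff.mp hh).1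
        · exact fun hxc => Finset.disjoint_left.mp hccd hxc hh
      have hpa : pmPartner M x = a := by
        have haz' := haz
        rw [hzeq] at haz'
        rcases Sym2.mem_iff.mp haz' with h | h
        · exact absurd (h ▸ haC₁) hxnC₁
        · exact h.symm
      rcases Finset.mem_union.mp hx with hh | hh
      · obtain ⟨hxSA, hxnP⟩ := Finset.mem_sdiff.mp hh
        exact hxnP (Finset.mem_filter.mpr ⟨hxSA, z, hzM, hxz, a, haz, haC₁⟩)
      · refine hQ z hzM (fun b hbz => ?_)
        rw [hzeq] at hbz
        rcases Sym2.mem_iff.mp hbz with rfl | rfl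
        · exact hC₂ hh
        · rw [hpa]; exact hC₁ haC₁
    exact ⟨z, ⟨hz2, hxz⟩, fun z' hz' => huniq z' ⟨Finset.filter_subset _ _ hz'.1, hz'.2⟩⟩


omit hdisj hC₁ hM hQ in
theorem isPM_union {s t : Finset α} {M M' : Finset (Sym2 α)} (hst : Disjoint s t)
    (h1 : IsPM s M) (h2 : IsPM t M') : IsPM (s ∪ t) (M ∪ M') := by
  refine ⟨?_, ?_, ?_⟩
  · intro z hz
    rcases Finset.mem_union.mp hz with h | h
    exacts [h1.1 z h, h2.1 z h]
  · intro z hz a ha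
    rcases Finset.mem_union.mp hz with h | h
    · exact Finset.mem_union_left _ (h1.2.1 z h a ha)
    · exact Finset.mem_union_right _ (h2.2.1 z h a ha)
  · intro x hx
    rcases Finset.mem_union.mp hx with h | h
    · obtain ⟨z, ⟨hzM, hxz⟩, hu⟩ := h1.2.2 x h
      refine ⟨z, ⟨Finset.mem_union_left _ hzM, hxz⟩, ?_⟩
      rintro z' ⟨hz', hxz'⟩
      rcases Finset.mem_union.mp hz' with h' | h'
      · exact hu z' ⟨h', hxz'⟩
      · exact absurd h (Finset.disjoint_right.mp hst (h2.2.1 z' h' x hxz'))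
    · obtain ⟨z, ⟨hzM, hxz⟩, hu⟩ := h2.2.2 x h
      refine ⟨z, ⟨Finset.mem_union_right _ hzM, hxz⟩, ?_⟩
      rintro z' ⟨hz', hxz'⟩
      rcases Finset.mem_union.mp hz' with h' | h'
      · exact absurd h (Finset.disjoint_left.mp hst (h1.2.1 z' h' x hxz'))
      · exact hu z' ⟨h', hxz'⟩

end Main

section Rev
variable {α : Type*} [DecidableEq α] {S₀ SA C₁ C₂ P₁ : Finset α}
  {M₁ M₂ : Finset (Sym2 α)}
variable (hdisj : Disjoint S₀ SA) (hC₁ : C₁ ⊆ S₀) (hC₂ : C₂ ⊆ S₀)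
  (hccd : Disjoint C₁ C₂) (hP : P₁ ⊆ SA) (hcard : P₁.card = C₁.card)
  (hM₁ : IsPM (P₁ ∪ C₁) M₁) (hQ₁ : ∀ z ∈ M₁, ¬ ∀ a ∈ z, a ∈ S₀)
  (hM₂ : IsPM ((SA \ P₁) ∪ C₂) M₂)

include hdisj hC₁ hP hcard hM₁ hQ₁

theorem key_meets : ∀ z ∈ M₁, ∃ a ∈ z, a ∈ C₁ := by
  refine pm_meets ?_ hcard hM₁ ?_
  · exact Finset.disjoint_left.mpr fun x hx hx' =>
      Finset.disjoint_left.mp hdisj (hC₁ hx') (hP hx)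
  · intro z hz
    have hq := hQ₁ z hz
    push_neg at hq
    obtain ⟨a, haz, haS₀⟩ := hq
    rcases Finset.mem_union.mp (hM₁.2.1 z hz a haz) with h | h
    · exact ⟨a, haz, h⟩
    · exact absurd (hC₁ h) haS₀

omit hP hcard hM₁ hQ₁
include hC₂ hccd hM₂

theorem m2_not_meets : ∀ z ∈ M₂, ¬ ∃ a ∈ z, a ∈ C₁ := by
  rintro z hz ⟨a, haz, haC₁⟩
  rcases Finset.mem_union.mp (hM₂.2.1 z hz a haz) with h | h
  · exact Finset.disjoint_left.mp hdisj (hC₁ ‹a ∈ C₁›) (Finset.mem_sdiff.mp h).1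
  · exact Finset.disjoint_left.mp hccd haC₁ h

omit hdisj hC₂ hccd hM₂
include hdisj hC₁ hC₂ hccd hP hcard hM₁ hQ₁ hM₂

theorem match1_union : match1 C₁ (M₁ ∪ M₂) = M₁ := by
  rw [match1, Finset.filter_union,
    Finset.filter_true_of_mem (key_meets hdisj hC₁ hP hcard hM₁ hQ₁),
    Finset.filter_false_of_mem (m2_not_meets hdisj hC₁ hC₂ hccd hM₂),
    Finset.union_empty]

theorem match2_union : match2 C₁ (M₁ ∪ M₂) = M₂ := by
  rw [match2, Finset.filter_union,
    Finset.filter_false_of_mem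
      (fun z hz h => h (key_meets hdisj hC₁ hP hcard hM₁ hQ₁ z hz)),
    Finset.filter_true_of_mem (m2_not_meets hdisj hC₁ hC₂ hccd hM₂),
    Finset.empty_union]

theorem part1_union : part1 C₁ SA (M₁ ∪ M₂) = P₁ := by
  ext x
  constructor
  · intro hx
    obtain ⟨hxSA, z, hz, hxz, hmeet⟩ := Finset.mem_filter.mp hx
    have hz1 : z ∈ M₁ := by
      rcases Finset.mem_union.mp hz with h | h
      · exact h
      · exact absurd hmeet (m2_not_meets hdisj hC₁ hC₂ hccd hM₂ z h)
    rcases Finset.mem_union.mp (hM₁.2.1 z hz1 x hxz) with h | h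
    · exact h
    · exact absurd hxSA (Finset.disjoint_right.mp hdisj.symm (hC₁ h)).elim
  · intro hx
    obtain ⟨z, ⟨hzM, hxz⟩, -⟩ := hM₁.2.2 x (Finset.mem_union_left _ hx)
    exact Finset.mem_filter.mpr ⟨hP hx, z, Finset.mem_union_left _ hzM, hxz,
      key_meets hdisj hC₁ hP hcard hM₁ hQ₁ z hzM⟩

end Rev

/-- The hafnian of the symmetric function `N` on the finite set `s`:
the sum over all perfect matchings `M` of `s` of the product of `N` over the pairs of `M`. -/
noncomputable def haf {α R : Type*} [Fintype α] [DecidableEq α] [CommRing R]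
    (N : α → α → R) (hN : ∀ a b, N a b = N b a) (s : Finset α) : R :=
  ∑ M ∈ Finset.univ.filter (fun M => IsPM s M), ∏ z ∈ M, Sym2.lift ⟨N, hN⟩ z

theorem haf_eq {α R : Type*} [Fintype α] [DecidableEq α] [CommRing R]
    (N : α → α → R) (hN : ∀ a b, N a b = N b a) (S₀ : Finset α)
    (hzero : ∀ a ∈ S₀, ∀ b ∈ S₀, N a b = 0) (s : Finset α) :
    haf N hN s = ∑ M ∈ Finset.univ.filter
        (fun M => IsPM s M ∧ ∀ z ∈ M, ¬ ∀ a ∈ z, a ∈ S₀),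
      ∏ z ∈ M, Sym2.lift ⟨N, hN⟩ z := by
  have hlift : ∀ (z : Sym2 α), (∀ a ∈ z, a ∈ S₀) → Sym2.lift ⟨N, hN⟩ z = 0 := by
    intro z
    induction z using Sym2.ind with
    | _ a b =>
      intro h
      rw [Sym2.lift_mk]
      exact hzero a (h a (by simp)) b (h b (by simp))
  rw [haf, ← Finset.filter_filter]
  refine (Finset.sum_filter_of_ne ?_).symm
  intro M hM hne
  by_contra h
  push_neg at h
  obtain ⟨z, hz, hall⟩ := h
  exact hne (Finset.prod_eq_zero hz (hlift z hall))

/-- Factorization of the hafnian: if `S = S₀ ⊔ S_A` and the symmetric function `N`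
vanishes on `S₀ × S₀`, then with an enumeration `c` of `S₀` and `0 < p ≤ m = |S₀|`,
the hafnian of `S` factorizes into a sum over ordered partitions of `S_A` into a
`p`-element subset `P₁` and its complement, of products of two smaller hafnians. -/
theorem stmt2 {α R : Type*} [Fintype α] [DecidableEq α] [CommRing R]
    (S₀ SA : Finset α) (hdisj : Disjoint S₀ SA)
    (N : α → α → R) (hN : ∀ a b, N a b = N b a)
    (hzero : ∀ a ∈ S₀, ∀ b ∈ S₀, N a b = 0)
    (m : ℕ) (hm : S₀.card = m) (c : Fin m → α)
    (hcinj : Function.Injective c) (hcimg : Finset.univ.image c = S₀)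
    (p : ℕ) (hp : 0 < p) (hpm : p ≤ m) :
    haf N hN (S₀ ∪ SA)
      = ∑ P₁ ∈ SA.powerset.filter (fun P => P.card = p),
          haf N hN (P₁ ∪ (Finset.univ.filter (fun i : Fin m => (i : ℕ) < p)).image c)
            * haf N hN ((SA \ P₁) ∪
                (Finset.univ.filter (fun i : Fin m => p ≤ (i : ℕ))).image c) := by
  classical
  set C₁ := (Finset.univ.filter (fun i : Fin m => (i : ℕ) < p)).image c with hC₁def
  set C₂ := (Finset.univ.filter (fun i : Fin m => p ≤ (i : ℕ))).image c with hC₂def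
  have hC₁S₀ : C₁ ⊆ S₀ := by
    rw [hC₁def, ← hcimg]
    exact Finset.image_subset_image (Finset.filter_subset _ _)
  have hC₂S₀ : C₂ ⊆ S₀ := by
    rw [hC₂def, ← hcimg]
    exact Finset.image_subset_image (Finset.filter_subset _ _)
  have hccd : Disjoint C₁ C₂ := by
    rw [hC₁def, hC₂def, Finset.disjoint_left]
    rintro x hx hx'
    obtain ⟨i, hi, rfl⟩ := Finset.mem_image.mp hx
    obtain ⟨j, hj, hji⟩ := Finset.mem_image.mp hx'
    simp only [Finset.mem_filter, Finset.mem_univ, true_and] at hi hj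
    cases hcinj hji
    omega
  have hcc : C₁ ∪ C₂ = S₀ := by
    have hfil : (Finset.univ.filter (fun i : Fin m => (i : ℕ) < p))
        ∪ (Finset.univ.filter (fun i : Fin m => p ≤ (i : ℕ)))
        = (Finset.univ : Finset (Fin m)) := by
      ext i
      simp only [Finset.mem_union, Finset.mem_filter, Finset.mem_univ, true_and,
        iff_true]
      omega
    rw [hC₁def, hC₂def, ← Finset.image_union, hfil, hcimg]
  have hC₁card : C₁.card = p := by
    have himg : (Finset.univ.filter (fun i : Fin m => (i : ℕ) < p))
        = Finset.univ.image (Fin.castLE hpm) := by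
      ext i
      simp only [Finset.mem_filter, Finset.mem_univ, true_and, Finset.mem_image]
      constructor
      · intro hi
        exact ⟨⟨(i : ℕ), hi⟩, rfl⟩
      · rintro ⟨j, -, rfl⟩
        exact j.2
    rw [hC₁def, himg, Finset.image_image,
      Finset.card_image_of_injective _ (hcinj.comp (Fin.castLE_injective hpm)),
      Finset.card_univ, Fintype.card_fin]
  -- restrict all hafnians to matchings with no pair inside S₀
  rw [haf_eq N hN S₀ hzero]
  have hR : ∀ P₁ ∈ SA.powerset.filter (fun P => P.card = p),
      haf N hN (P₁ ∪ C₁) * haf N hN ((SA \ P₁) ∪ C₂)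
        = ∑ q ∈ (Finset.univ.filter
              (fun M => IsPM (P₁ ∪ C₁) M ∧ ∀ z ∈ M, ¬ ∀ a ∈ z, a ∈ S₀)) ×ˢ
            (Finset.univ.filter
              (fun M => IsPM ((SA \ P₁) ∪ C₂) M ∧ ∀ z ∈ M, ¬ ∀ a ∈ z, a ∈ S₀)),
          (∏ z ∈ q.1, Sym2.lift ⟨N, hN⟩ z) * ∏ z ∈ q.2, Sym2.lift ⟨N, hN⟩ z := by
    intro P₁ _
    rw [haf_eq N hN S₀ hzero, haf_eq N hN S₀ hzero, Finset.sum_mul_sum,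
      ← Finset.sum_product']
  rw [Finset.sum_congr rfl hR, Finset.sum_sigma']
  -- the bijection
  refine Finset.sum_bij'
    (fun M _ => (⟨part1 C₁ SA M, (match1 C₁ M, match2 C₁ M)⟩ :
      Σ _ : Finset α, Finset (Sym2 α) × Finset (Sym2 α)))
    (fun x _ => x.2.1 ∪ x.2.2) ?_ ?_ ?_ ?_ ?_
  · -- hi : forward map lands in the sigma set
    intro M hMmem
    obtain ⟨-, hM, hQ⟩ := Finset.mem_filter.mp hMmem
    have hpc : (part1 C₁ SA M).card = p := by
      rw [part1_card hdisj hC₁S₀ hM hQ, hC₁card]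
    refine Finset.mem_sigma.mpr ⟨?_, Finset.mem_product.mpr ⟨?_, ?_⟩⟩
    · exact Finset.mem_filter.mpr
        ⟨Finset.mem_powerset.mpr part1_subset, hpc⟩
    · exact Finset.mem_filter.mpr ⟨Finset.mem_univ _,
        isPM_match1 hdisj hC₁S₀ hM hQ,
        fun z hz => hQ z (match1_subset hz)⟩
    · exact Finset.mem_filter.mpr ⟨Finset.mem_univ _,
        isPM_match2 hdisj hC₁S₀ hM hQ hC₂S₀ hcc hccd,
        fun z hz => hQ z (match2_subset hz)⟩
  · -- hj : backward map lands in the filter set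
    rintro ⟨P₁, M₁, M₂⟩ hx
    dsimp only at hx ⊢
    obtain ⟨hP₁mem, hprod⟩ := Finset.mem_sigma.mp hx
    obtain ⟨hM₁mem, hM₂mem⟩ := Finset.mem_product.mp hprod
    obtain ⟨hP₁pow, hP₁card⟩ := Finset.mem_filter.mp hP₁mem
    have hP₁SA : P₁ ⊆ SA := Finset.mem_powerset.mp hP₁pow
    obtain ⟨-, hM₁, hQ₁⟩ := Finset.mem_filter.mp hM₁mem
    obtain ⟨-, hM₂, hQ₂⟩ := Finset.mem_filter.mp hM₂mem
    have d1 : Disjoint P₁ (SA \ P₁) := Finset.disjoint_sdiff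
    have d2 : Disjoint P₁ C₂ := Finset.disjoint_left.mpr
      (fun x hx1 hx2 => Finset.disjoint_right.mp hdisj (hP₁SA hx1) (hC₂S₀ hx2))
    have d3 : Disjoint C₁ (SA \ P₁) := Finset.disjoint_left.mpr
      (fun x hx1 hx2 =>
        Finset.disjoint_left.mp hdisj (hC₁S₀ hx1) (Finset.mem_sdiff.mp hx2).1)
    have D : Disjoint (P₁ ∪ C₁) ((SA \ P₁) ∪ C₂) :=
      Finset.disjoint_union_left.mpr
        ⟨Finset.disjoint_union_right.mpr ⟨d1, d2⟩,
         Finset.disjoint_union_right.mpr ⟨d3, hccd⟩⟩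
    have gu : (P₁ ∪ C₁) ∪ ((SA \ P₁) ∪ C₂) = S₀ ∪ SA := by
      ext x
      simp only [Finset.mem_union, Finset.mem_sdiff]
      constructor
      · rintro ((h | h) | (⟨h, -⟩ | h))
        · exact Or.inr (hP₁SA h)
        · exact Or.inl (hC₁S₀ h)
        · exact Or.inr h
        · exact Or.inl (hC₂S₀ h)
      · rintro (h | h)
        · rcases Finset.mem_union.mp (hcc ▸ h : x ∈ C₁ ∪ C₂) with h' | h'
          · exact Or.inl (Or.inr h')
          · exact Or.inr (Or.inr h')
        · by_cases hxP : x ∈ P₁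
          · exact Or.inl (Or.inl hxP)
          · exact Or.inr (Or.inl ⟨h, hxP⟩)
    have hPM := isPM_union D hM₁ hM₂
    rw [gu] at hPM
    refine Finset.mem_filter.mpr ⟨Finset.mem_univ _, hPM, ?_⟩
    intro z hz
    rcases Finset.mem_union.mp hz with h | h
    exacts [hQ₁ z h, hQ₂ z h]
  · -- left inverse
    intro M hMmem
    exact match_union_eq
  · -- right inverse
    rintro ⟨P₁, M₁, M₂⟩ hx
    dsimp only at hx ⊢
    obtain ⟨hP₁mem, hprod⟩ := Finset.mem_sigma.mp hx
    obtain ⟨hM₁mem, hM₂mem⟩ := Finset.mem_product.mp hprod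
    obtain ⟨hP₁pow, hP₁card⟩ := Finset.mem_filter.mp hP₁mem
    have hP₁SA : P₁ ⊆ SA := Finset.mem_powerset.mp hP₁pow
    obtain ⟨-, hM₁, hQ₁⟩ := Finset.mem_filter.mp hM₁mem
    obtain ⟨-, hM₂, hQ₂⟩ := Finset.mem_filter.mp hM₂mem
    have hcard : P₁.card = C₁.card := by rw [hP₁card, hC₁card]
    have e1 := part1_union hdisj hC₁S₀ hC₂S₀ hccd hP₁SA hcard hM₁ hQ₁ hM₂
    have e2 := match1_union hdisj hC₁S₀ hC₂S₀ hccd hP₁SA hcard hM₁ hQ₁ hM₂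
    have e3 := match2_union hdisj hC₁S₀ hC₂S₀ hccd hP₁SA hcard hM₁ hQ₁ hM₂
    rw [e1, e2, e3]
  · -- weights match
    intro M hMmem
    calc (∏ z ∈ M, Sym2.lift ⟨N, hN⟩ z)
        = ∏ z ∈ match1 C₁ M ∪ match2 C₁ M, Sym2.lift ⟨N, hN⟩ z := by
          rw [match_union_eq]
      _ = _ := Finset.prod_union match_disjoint
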